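/- Fix n ≥ 1. There exist δ > 0 and c > 0 such that for every correlation matrix C ∈ ℝ^{n×n} with ‖C − I_n‖_F < δ, |(1/n)·tr(C^{1/2}) − (1 − d(C)/8)| ≤ c·‖C − I_n‖_F³. That is, the maximal average correlation ρ̄_* = (1/n)Σ_i λ_i^{1/2} achieved by OASIS satisfies ρ̄_* = 1 − d(C)/8 + O(‖C − I_n‖³) as C → I_n. -/

import Mathlib

/-!
Diagonalise `C = U diag(λ) Uᵀ` and put `xᵢ = λᵢ - 1`. The unit diagonal gives
`∑ xᵢ = tr C - n = 0`, and orthogonal invariance of the Frobenius norm gives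
`∑ xᵢ² = ‖C - I‖_F²`. Hence `tr C^{1/2} - (n - ‖C - I‖_F²/8)` is the sum of the second-order
Taylor remainders `√(1 + xᵢ) - (1 + xᵢ/2 - xᵢ²/8)`, each at most `|xᵢ|³` once `|xᵢ| ≤ 1/2`,
and `∑ |xᵢ|³ ≤ max |xᵢ| · ∑ xᵢ² ≤ ‖C - I‖_F³`.
-/

open Matrix BigOperators

noncomputable def frobNorm {n : ℕ} (A : Matrix (Fin n) (Fin n) ℝ) : ℝ :=
  Real.sqrt (∑ i, ∑ j, (A i j) ^ 2)

noncomputable def Matrix.PosSemidef.sqrt {n : Type*} [Fintype n] [DecidableEq n]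
    {A : Matrix n n ℝ} (hA : A.PosSemidef) : Matrix n n ℝ :=
  (hA.1.eigenvectorUnitary : Matrix n n ℝ) * diagonal (Real.sqrt ∘ hA.1.eigenvalues) *
    (star (hA.1.eigenvectorUnitary : Matrix n n ℝ))

/-- `d(C) = (1/n)·‖C − I‖_F²`. -/
noncomputable def dC {n : ℕ} (C : Matrix (Fin n) (Fin n) ℝ) : ℝ :=
  (1 / (n : ℝ)) * frobNorm (C - 1) ^ 2

theorem Real.abs_sqrt_one_add_sub_le {x : ℝ} (hx : |x| ≤ 1 / 2) :
    |√(1 + x) - (1 + x / 2 - x ^ 2 / 8)| ≤ |x| ^ 3 := by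
  obtain ⟨hx₁, hx₂⟩ := abs_le.mp hx
  have hp_ge : 7 / 10 ≤ 1 + x / 2 - x ^ 2 / 8 := by
    nlinarith [mul_nonneg (sub_nonneg.2 hx₁) (sub_nonneg.2 hx₂)]
  set s := √(1 + x)
  set p := 1 + x / 2 - x ^ 2 / 8
  have hs : s ^ 2 = 1 + x := Real.sq_sqrt (by linarith)
  have hs_ge : 7 / 10 ≤ s := by nlinarith [Real.sqrt_nonneg (1 + x)]
  have hfactor : (s - p) * (s + p) = x ^ 3 / 8 - x ^ 4 / 64 := by linear_combination hs
  have hrhs : |x ^ 3 / 8 - x ^ 4 / 64| ≤ |x| ^ 3 * (7 / 5) := by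
    have hx4 : |x| ^ 4 ≤ |x| ^ 3 / 2 := by
      rw [pow_succ]; nlinarith [pow_nonneg (abs_nonneg x) 3]
    calc |x ^ 3 / 8 - x ^ 4 / 64| ≤ |x ^ 3 / 8| + |x ^ 4 / 64| := abs_sub _ _
      _ = |x| ^ 3 / 8 + |x| ^ 4 / 64 := by rw [abs_div, abs_div, abs_pow, abs_pow]; norm_num
      _ ≤ |x| ^ 3 * (7 / 5) := by linarith [pow_nonneg (abs_nonneg x) 3]
  -- rationalise: `|s - p| = |s² - p²| / (s + p)`
  have hsum_ge : 7 / 5 ≤ s + p := by linarith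
  have hpos : 0 < s + p := by linarith
  rw [← mul_le_mul_iff_of_pos_right hpos, ← abs_of_pos hpos, ← abs_mul, hfactor, abs_of_pos hpos]
  calc _ ≤ |x| ^ 3 * (7 / 5) := hrhs
    _ ≤ |x| ^ 3 * (s + p) := by gcongr

theorem Finset.sum_abs_pow_three_le_sqrt_sum_sq_pow_three {ι : Type*} (s : Finset ι) (x : ι → ℝ) :
    ∑ i ∈ s, |x i| ^ 3 ≤ √(∑ i ∈ s, x i ^ 2) ^ 3 := by
  set F := √(∑ i ∈ s, x i ^ 2)
  have hF : F ^ 2 = ∑ i ∈ s, x i ^ 2 := Real.sq_sqrt (Finset.sum_nonneg fun i _ => sq_nonneg _)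
  have hle : ∀ i ∈ s, |x i| ≤ F := fun i hi =>
    Real.abs_le_sqrt (Finset.single_le_sum (f := fun i => x i ^ 2) (fun i _ => sq_nonneg _) hi)
  calc ∑ i ∈ s, |x i| ^ 3 = ∑ i ∈ s, |x i| * x i ^ 2 := by
        refine Finset.sum_congr rfl fun i _ => ?_; rw [← sq_abs (x i)]; ring
    _ ≤ ∑ i ∈ s, F * x i ^ 2 := Finset.sum_le_sum fun i hi => by gcongr; exact hle i hi
    _ = F ^ 3 := by rw [← Finset.mul_sum, ← hF]; ring

theorem abs_sum_sqrt_one_add_sub_le {ι : Type*} [Fintype ι] (x : ι → ℝ)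
    (hsum : ∑ i, x i = 0) (hsmall : √(∑ i, x i ^ 2) ≤ 1 / 2) :
    |∑ i, √(1 + x i) - (Fintype.card ι - (∑ i, x i ^ 2) / 8)| ≤ √(∑ i, x i ^ 2) ^ 3 := by
  have hx : ∀ i, |x i| ≤ 1 / 2 := fun i =>
    (Real.abs_le_sqrt (Finset.single_le_sum (f := fun i => x i ^ 2)
      (fun i _ => sq_nonneg _) (Finset.mem_univ i))).trans hsmall
  have hexpand : ∑ i, √(1 + x i) - (Fintype.card ι - (∑ i, x i ^ 2) / 8) =
      ∑ i, (√(1 + x i) - (1 + x i / 2 - x i ^ 2 / 8)) := by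
    simp only [Finset.sum_sub_distrib, Finset.sum_add_distrib, ← Finset.sum_div, hsum,
      Finset.sum_const, Finset.card_univ, nsmul_eq_mul, mul_one]
    ring
  calc _ ≤ ∑ i, |x i| ^ 3 := by
        rw [hexpand]
        exact (Finset.abs_sum_le_sum_abs _ _).trans
          (Finset.sum_le_sum fun i _ => Real.abs_sqrt_one_add_sub_le (hx i))
    _ ≤ _ := Finset.sum_abs_pow_three_le_sqrt_sum_sq_pow_three _ x

namespace Matrix.IsHermitian

variable {ι : Type*} [Fintype ι] [DecidableEq ι] {A : Matrix ι ι ℝ} (hA : A.IsHermitian)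

local notation "U" => (hA.eigenvectorUnitary : Matrix ι ι ℝ)

theorem trace_conj_eigenvectorUnitary (f : ι → ℝ) :
    (U * diagonal f * star U).trace = ∑ i, f i := by
  rw [trace_mul_cycle, Unitary.coe_star_mul_self, Matrix.one_mul, trace_diagonal]

theorem conj_eigenvectorUnitary_mul (f g : ι → ℝ) :
    U * diagonal f * star U * (U * diagonal g * star U) = U * diagonal (f * g) * star U := by
  have h := Unitary.coe_star_mul_self hA.eigenvectorUnitary
  rw [show diagonal (f * g) = diagonal f * diagonal g from (diagonal_mul_diagonal f g).symm]
  simp only [Matrix.mul_assoc]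
  rw [← Matrix.mul_assoc (star U) U, h, Matrix.one_mul]

theorem sum_sq_conj_eigenvectorUnitary (f : ι → ℝ) :
    ∑ i, ∑ j, (U * diagonal f * star U) i j ^ 2 = ∑ i, f i ^ 2 := by
  set M := U * diagonal f * star U
  have hsymm : Mᵀ = M := by
    simp [M, ← conjTranspose_eq_transpose_of_trivial, Matrix.conjTranspose_mul, Matrix.mul_assoc,
      star_eq_conjTranspose]
  calc ∑ i, ∑ j, M i j ^ 2 = (M * Mᵀ).trace := by simp [trace, mul_apply, sq]
    _ = (M * M).trace := by rw [hsymm]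
    _ = ∑ i, f i ^ 2 := by
        rw [hA.conj_eigenvectorUnitary_mul, trace_conj_eigenvectorUnitary]; simp [sq]

theorem eq_conj_eigenvectorUnitary : A = U * diagonal hA.eigenvalues * star U := by
  simpa [RCLike.ofReal_real_eq_id] using hA.spectral_theorem

theorem sub_one_eq_conj_eigenvectorUnitary :
    A - 1 = U * diagonal (hA.eigenvalues - 1) * star U := by
  have hdiag : diagonal (hA.eigenvalues - 1) = diagonal hA.eigenvalues - 1 := by
    rw [← diagonal_one, diagonal_sub]; rfl
  rw [hdiag, Matrix.mul_sub, Matrix.sub_mul, Matrix.mul_one,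
    Unitary.mul_star_self_of_mem hA.eigenvectorUnitary.2,
    ← hA.eq_conj_eigenvectorUnitary]

end Matrix.IsHermitian

theorem Matrix.PosSemidef.trace_sqrt {ι : Type*} [Fintype ι] [DecidableEq ι] {A : Matrix ι ι ℝ}
    (hA : A.PosSemidef) : hA.sqrt.trace = ∑ i, √(hA.1.eigenvalues i) :=
  hA.1.trace_conj_eigenvectorUnitary _

theorem Matrix.IsHermitian.frobNorm_sub_one {n : ℕ} {A : Matrix (Fin n) (Fin n) ℝ}
    (hA : A.IsHermitian) : frobNorm (A - 1) = √(∑ i, (hA.eigenvalues i - 1) ^ 2) := by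
  rw [frobNorm, hA.sub_one_eq_conj_eigenvectorUnitary, hA.sum_sq_conj_eigenvectorUnitary]
  rfl

/-- **OASIS expansion near the identity.** For every fixed `n ≥ 1` there are
`δ, c > 0` such that any correlation matrix `C` with `‖C − I‖_F < δ` satisfies
`|(1/n)·tr(C^{1/2}) − (1 − d(C)/8)| ≤ c·‖C − I‖_F³`; i.e.
`ρ̄_* = 1 − d(C)/8 + O(‖C − I‖³)`. -/
theorem stmt_12 (n : ℕ) (hn : 1 ≤ n) :
    ∃ δ > (0 : ℝ), ∃ c > (0 : ℝ), ∀ C : Matrix (Fin n) (Fin n) ℝ,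
      ∀ hC : C.PosDef, (∀ i, C i i = 1) → frobNorm (C - 1) < δ →
      |(1 / (n : ℝ)) * (hC.posSemidef.sqrt).trace - (1 - dC C / 8)|
        ≤ c * frobNorm (C - 1) ^ 3 := by
  refine ⟨1 / 2, by norm_num, 1, one_pos, fun C hC hdiag hsmall => ?_⟩
  have hH := hC.isHermitian
  set x : Fin n → ℝ := fun i => hH.eigenvalues i - 1
  have hF : frobNorm (C - 1) = √(∑ i, x i ^ 2) := hH.frobNorm_sub_one
  have hsum : ∑ i, x i = 0 := by
    have htr := hH.trace_eq_sum_eigenvalues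
    simp only [trace, diag, hdiag, Finset.sum_const, Finset.card_univ, Fintype.card_fin,
      nsmul_eq_mul, mul_one, RCLike.ofReal_real_eq_id, id] at htr
    simp [x, Finset.sum_sub_distrib, ← htr]
  have hsqrt : hC.posSemidef.sqrt.trace = ∑ i, √(1 + x i) := by
    simp [Matrix.PosSemidef.trace_sqrt, x]
  have hn' : (0 : ℝ) < n := by exact_mod_cast hn
  have hexpand : (1 / (n : ℝ)) * hC.posSemidef.sqrt.trace - (1 - dC C / 8) =
      (1 / n) * (∑ i, √(1 + x i) - (Fintype.card (Fin n) - (∑ i, x i ^ 2) / 8)) := by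
    rw [hsqrt, dC, hF, Real.sq_sqrt (Finset.sum_nonneg fun i _ => sq_nonneg _), Fintype.card_fin]
    field_simp
  have hbound := abs_sum_sqrt_one_add_sub_le x hsum (hF ▸ hsmall.le)
  rw [hexpand, abs_mul, abs_of_pos (by positivity), hF, one_mul]
  calc _ ≤ 1 / (n : ℝ) * √(∑ i, x i ^ 2) ^ 3 := by gcongr
    _ ≤ √(∑ i, x i ^ 2) ^ 3 := by
      refine mul_le_of_le_one_left (by positivity) ?_
      rw [div_le_one hn']; exact_mod_cast hn
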